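/- For every field F there do not exist 10 pairwise distinct lines in ℙ²(F) having exactly two points of multiplicity 4 and exactly eleven triple points (and hence no double points and no points of multiplicity ≥ 5). -/

import Mathlib

/-!
Two distinct lines meet in at most one point, so the sets of ordered pairs of distinct lines
through the various points are disjoint, a point of multiplicity `m` contributing `m (m - 1)`
pairs. Two quadruple and eleven triple points already account for `2·12 + 11·6 = 90 = 10·9`
pairs, so every intersection point is a triple or quadruple point. Counting the other nine lines
along a fixed line then gives `9 = 3a + 2b`, where `a ≤ 2` is the number of quadruple points on
it; hence `a = 1`. So each of the ten lines passes through exactly one of the two quadruple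
points, which carry only `4 + 4` lines.
-/

/-- The projective plane over `F` (also used, by duality, for the lines of that plane). -/
abbrev ProjPlane (F : Type*) [Field F] := Projectivization F (Fin 3 → F)

/-- The point `P` lies on the line `L` (a line is recorded by the projective class of the
coefficient vector of a defining linear form): the pairing of representatives vanishes.
This does not depend on the choice of representatives. -/
def OnLine {F : Type*} [Field F] (P L : ProjPlane F) : Prop :=
  dotProduct P.rep L.rep = 0

/-- The multiplicity of a point `P` with respect to a configuration `lines`:
the number of lines of the configuration passing through `P`. -/
noncomputable def mult {F : Type*} [Field F] (lines : Set (ProjPlane F))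
    (P : ProjPlane F) : ℕ :=
  {L ∈ lines | OnLine P L}.ncard

namespace Projectivization

open scoped LinearAlgebra.Projectivization

variable {F : Type*} [Field F]

theorem eq_cross_of_orthogonal [DecidableEq F] {u v w : ℙ F (Fin 3 → F)} (hvw : v ≠ w)
    (hv : u.orthogonal v) (hw : u.orthogonal w) : u = cross v w := by
  induction u with | h u hu =>
  induction v with | h v hv' =>
  induction w with | h w hw' =>
  rw [orthogonal_mk] at hv hw
  rw [cross_mk_of_ne hv' hw' hvw, mk_eq_mk_iff_crossProduct_eq_zero,
    cross_cross_eq_smul_sub_smul', hw, dotProduct_comm v, hv, zero_smul, zero_smul, sub_zero]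

end Projectivization

section Incidence

open Finset

def LinesMeetAtMostOnce {α β : Type*} (I : α → β → Prop) : Prop :=
  ∀ ⦃P Q L M⦄, L ≠ M → I P L → I P M → I Q L → I Q M → P = Q

variable {α β : Type*} {I : α → β → Prop} [∀ P L, Decidable (I P L)]
  {s : Finset β} {X : Finset α}

theorem exists_mem_of_sum_card_offDiag_eq [DecidableEq β] (hI : LinesMeetAtMostOnce I)
    (hX : ∑ P ∈ X, #{L ∈ s | I P L}.offDiag = #s.offDiag)
    {L M : β} (hL : L ∈ s) (hM : M ∈ s) (hLM : L ≠ M) : ∃ P ∈ X, I P L ∧ I P M := by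
  have hdisj : (X : Set α).PairwiseDisjoint fun P ↦ {L ∈ s | I P L}.offDiag := by
    intro P _ Q _ hPQ
    refine disjoint_left.mpr fun ⟨L, M⟩ hP hQ ↦ hPQ ?_
    simp only [mem_offDiag, mem_filter] at hP hQ
    exact hI hP.2.2 hP.1.2 hP.2.1.2 hQ.1.2 hQ.2.1.2
  have hsub : X.biUnion (fun P ↦ {L ∈ s | I P L}.offDiag) ⊆ s.offDiag :=
    biUnion_subset.mpr fun P _ ↦ offDiag_mono (filter_subset _ s)
  have hcover := eq_of_subset_of_card_le hsub (by rw [card_biUnion hdisj, hX])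
  have hpair : (L, M) ∈ s.offDiag := mem_offDiag.mpr ⟨hL, hM, hLM⟩
  rw [← hcover, mem_biUnion] at hpair
  obtain ⟨P, hP, hLMP⟩ := hpair
  simp only [mem_offDiag, mem_filter] at hLMP
  exact ⟨P, hP, hLMP.1.2, hLMP.2.1.2⟩

theorem sum_card_erase_eq_card_sub_one [DecidableEq β] (hI : LinesMeetAtMostOnce I)
    {L : β} (hL : L ∈ s) (hcover : ∀ M ∈ s, M ≠ L → ∃ P ∈ X, I P L ∧ I P M) :
    ∑ P ∈ X with I P L, #({M ∈ s | I P M}.erase L) = #s - 1 := by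
  have hdisj : ((X.filter (I · L) : Finset α) : Set α).PairwiseDisjoint
      fun P ↦ {M ∈ s | I P M}.erase L := by
    intro P hP Q hQ hPQ
    refine disjoint_left.mpr fun M hMP hMQ ↦ hPQ ?_
    simp only [mem_coe, mem_erase, mem_filter] at hP hQ hMP hMQ
    exact hI (Ne.symm hMP.1) hP.2 hMP.2.2 hQ.2 hMQ.2.2
  have hsplit : (X.filter (I · L)).biUnion (fun P ↦ {M ∈ s | I P M}.erase L) = s.erase L := by
    ext M
    simp only [mem_biUnion, mem_filter, mem_erase]
    constructor
    · rintro ⟨P, -, hMP⟩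
      exact ⟨hMP.1, hMP.2.1⟩
    · rintro ⟨hML, hM⟩
      obtain ⟨P, hP, hPL, hPM⟩ := hcover M hM hML
      exact ⟨P, ⟨hP, hPL⟩, hML, hM, hPM⟩
  rw [← card_biUnion hdisj, hsplit, card_erase_of_mem hL]

theorem card_ne_ten_of_quadruple_triple_points (hI : LinesMeetAtMostOnce I)
    {Q T : Finset α} (hQ : #Q = 2) (hT : #T = 11)
    (hQ4 : ∀ P ∈ Q, #{L ∈ s | I P L} = 4) (hT3 : ∀ P ∈ T, #{L ∈ s | I P L} = 3) :
    #s ≠ 10 := by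
  classical
  intro hs
  have hQT : Disjoint Q T := disjoint_left.mpr fun P hPQ hPT ↦ by
    have := hQ4 P hPQ; have := hT3 P hPT; omega
  have hpairs : ∑ P ∈ Q ∪ T, #{L ∈ s | I P L}.offDiag = #s.offDiag := by
    rw [sum_union hQT, sum_const_nat (m := 12) fun P hP ↦ by rw [offDiag_card, hQ4 P hP],
      sum_const_nat (m := 6) fun P hP ↦ by rw [offDiag_card, hT3 P hP], offDiag_card, hQ, hT, hs]
  have hline : ∀ L ∈ s, #{P ∈ Q | I P L} = 1 := by
    intro L hL
    have hsum := sum_card_erase_eq_card_sub_one hI hL fun M hM hML ↦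
      exists_mem_of_sum_card_offDiag_eq hI hpairs hL hM (Ne.symm hML)
    have herase : ∀ P, I P L → #({M ∈ s | I P M}.erase L) = #{M ∈ s | I P M} - 1 :=
      fun P hPL ↦ card_erase_of_mem (mem_filter.mpr ⟨hL, hPL⟩)
    rw [filter_union, sum_union (disjoint_filter_filter hQT),
      sum_const_nat (m := 3) fun P hP ↦ by
        rw [herase P (mem_filter.mp hP).2, hQ4 P (mem_filter.mp hP).1],
      sum_const_nat (m := 2) fun P hP ↦ by
        rw [herase P (mem_filter.mp hP).2, hT3 P (mem_filter.mp hP).1], hs] at hsum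
    have := card_filter_le Q (I · L)
    omega
  have hincidences : ∑ P ∈ Q, #{L ∈ s | I P L} = ∑ L ∈ s, #{P ∈ Q | I P L} :=
    sum_card_bipartiteAbove_eq_sum_card_bipartiteBelow I
  rw [sum_const_nat hQ4, sum_const_nat hline, hQ, hs] at hincidences
  omega

end Incidence

section ProjectivePlane

open Finset

variable {F : Type*} [Field F]

theorem onLine_iff_orthogonal {P L : ProjPlane F} : OnLine P L ↔ P.orthogonal L := by
  have h := Projectivization.orthogonal_mk P.rep_nonzero L.rep_nonzero
  rw [P.mk_rep, L.mk_rep] at h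
  exact h.symm

theorem linesMeetAtMostOnce_onLine : LinesMeetAtMostOnce (OnLine (F := F)) := by
  classical
  intro P Q L M hLM hPL hPM hQL hQM
  simp only [onLine_iff_orthogonal] at hPL hPM hQL hQM
  rw [Projectivization.eq_cross_of_orthogonal hLM hPL hPM,
    Projectivization.eq_cross_of_orthogonal hLM hQL hQM]

theorem mult_eq_card_filter {lines : Set (ProjPlane F)} (hlines : lines.Finite) (P : ProjPlane F)
    [DecidablePred (OnLine P)] : mult lines P = #{L ∈ hlines.toFinset | OnLine P L} := by
  simp [mult, ← Set.ncard_coe_finset]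

end ProjectivePlane

/-- Over every field there is no configuration of `10` pairwise distinct lines in `ℙ²(F)`
with exactly two points of multiplicity `4` and exactly eleven triple points. -/
theorem no_ten_lines_two_quadruple_points (F : Type*) [Field F] :
    ¬ ∃ lines : Set (ProjPlane F),
        lines.ncard = 10 ∧
        {P : ProjPlane F | mult lines P = 4}.ncard = 2 ∧
        {P : ProjPlane F | mult lines P = 3}.ncard = 11 := by
  classical
  rintro ⟨lines, h10, h4, h3⟩
  have hlines : lines.Finite := Set.finite_of_ncard_ne_zero (by omega)
  have hQ : {P | mult lines P = 4}.Finite := Set.finite_of_ncard_ne_zero (by omega)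
  have hT : {P | mult lines P = 3}.Finite := Set.finite_of_ncard_ne_zero (by omega)
  have hcard : hlines.toFinset.card = 10 := by rw [← Set.ncard_eq_toFinset_card _ hlines, h10]
  refine card_ne_ten_of_quadruple_triple_points linesMeetAtMostOnce_onLine
    (Q := hQ.toFinset) (T := hT.toFinset) ?_ ?_ ?_ ?_ hcard
  · rw [← Set.ncard_eq_toFinset_card _ hQ, h4]
  · rw [← Set.ncard_eq_toFinset_card _ hT, h3]
  all_goals
    intro P hP
    rw [← mult_eq_card_filter hlines]
    simpa using hP
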